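/- arXiv:math/0010149 — 9 statements merged into one kernel-verified Lean document; each statement's English description precedes it below -/
import Mathlib

section
/- For all natural numbers n, the sum over i from 0 to n of C(n,i)·F_i equals F_{2n}, where F_i is the i-th Fibonacci number. -/
/-!
Binet's formula writes `F_i` as `(φ ^ i - ψ ^ i) / √5`, and both roots of `x ^ 2 = x + 1`
satisfy `∑ C(n, i) x ^ i = (x + 1) ^ n = (x ^ 2) ^ n = x ^ (2 n)` by the binomial theorem.
-/

open Finset Real

theorem sum_range_choose_mul_pow_of_sq_eq_add_one {R : Type*} [CommSemiring R] {x : R}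
    (hx : x ^ 2 = x + 1) (n : ℕ) :
    ∑ i ∈ range (n + 1), (n.choose i : R) * x ^ i = x ^ (2 * n) := by
  rw [pow_mul, hx, add_pow]
  simp only [one_pow, mul_one, mul_comm]

theorem stmt_2 (n : ℕ) :
    ∑ i ∈ Finset.range (n + 1), n.choose i * Nat.fib i = Nat.fib (2 * n) := by
  have hbinet : ∑ i ∈ range (n + 1), (n.choose i : ℝ) * Nat.fib i = Nat.fib (2 * n) := by
    simp only [coe_fib_eq, mul_div_assoc', ← sum_div, mul_sub, sum_sub_distrib,
      sum_range_choose_mul_pow_of_sq_eq_add_one goldenRatio_sq,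
      sum_range_choose_mul_pow_of_sq_eq_add_one goldenConj_sq]
  exact_mod_cast hbinet
end

section
/- For all natural numbers n, the sum over i from 0 to 2n of C(2n,i)·F_i^2 equals 5^{n-1}·L_{2n} when n ≥ 1, where L denotes the Lucas sequence. -/
/-! Binet's formulas give `5 F_i² = φ^{2i} + ψ^{2i} - 2 (-1)^i`, so the binomial theorem turns
`5 ∑ C(m,i) F_i²` into `(1 + φ²)^m + (1 + ψ²)^m - 2 · 0^m`. Since `1 + φ² = √5 φ` and
`1 + ψ² = -√5 ψ`, for `m = 2n ≥ 2` this is `5^n (φ^{2n} + ψ^{2n}) = 5^n L_{2n}`. -/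

def lucas : ℕ → ℤ
  | 0 => 2
  | 1 => 1
  | n + 2 => lucas (n + 1) + lucas n

open Finset Real goldenRatio

lemma lucas_eq_goldenRatio_pow_add_goldenConj_pow (n : ℕ) : (lucas n : ℝ) = φ ^ n + ψ ^ n := by
  induction n using Nat.twoStepInduction with
  | zero => norm_num [lucas]
  | one => simp [lucas, goldenRatio_add_goldenConj]
  | more n ih₀ ih₁ =>
    rw [lucas, Int.cast_add, ih₀, ih₁]
    linear_combination -(φ ^ n * goldenRatio_sq + ψ ^ n * goldenConj_sq)

lemma five_mul_fib_sq (i : ℕ) :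
    5 * (Nat.fib i : ℝ) ^ 2 = (φ ^ 2) ^ i + (ψ ^ 2) ^ i - 2 * (-1) ^ i := by
  rw [coe_fib_eq, div_pow, sq_sqrt (by norm_num), mul_div_cancel₀ _ (by norm_num), sub_sq,
    ← goldenRatio_mul_goldenConj, mul_pow, pow_right_comm φ, pow_right_comm ψ]
  ring

lemma sum_range_choose_mul_pow {R : Type*} [CommSemiring R] (x : R) (m : ℕ) :
    ∑ i ∈ range (m + 1), (m.choose i : R) * x ^ i = (1 + x) ^ m := by
  rw [add_comm 1 x, add_pow]
  exact sum_congr rfl fun i _ => by rw [one_pow, mul_one, mul_comm]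

-- `φ` and `ψ` are abbreviations of `(1 ± √5) / 2`, so `ring` only needs `√5 ^ 2 = 5`.
lemma one_add_goldenRatio_sq : 1 + φ ^ 2 = √5 * φ := by
  linear_combination -sq_sqrt (show (0 : ℝ) ≤ 5 by norm_num) / 4

lemma one_add_goldenConj_sq : 1 + ψ ^ 2 = -(√5 * ψ) := by
  linear_combination -sq_sqrt (show (0 : ℝ) ≤ 5 by norm_num) / 4

lemma five_mul_sum_range_choose_mul_fib_sq (m : ℕ) :
    5 * ∑ i ∈ range (m + 1), (m.choose i : ℝ) * (Nat.fib i : ℝ) ^ 2 =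
      (√5 * φ) ^ m + (-(√5 * ψ)) ^ m - 2 * 0 ^ m := by
  calc 5 * ∑ i ∈ range (m + 1), (m.choose i : ℝ) * (Nat.fib i : ℝ) ^ 2
      = ∑ i ∈ range (m + 1), (m.choose i : ℝ) * (φ ^ 2) ^ i
          + ∑ i ∈ range (m + 1), (m.choose i : ℝ) * (ψ ^ 2) ^ i
          - 2 * ∑ i ∈ range (m + 1), (m.choose i : ℝ) * (-1) ^ i := by
        simp only [Finset.mul_sum, ← sum_add_distrib, ← sum_sub_distrib]
        exact sum_congr rfl fun i _ => by rw [mul_left_comm, five_mul_fib_sq]; ring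
    _ = (√5 * φ) ^ m + (-(√5 * ψ)) ^ m - 2 * 0 ^ m := by
        rw [sum_range_choose_mul_pow, sum_range_choose_mul_pow, sum_range_choose_mul_pow,
          one_add_goldenRatio_sq, one_add_goldenConj_sq, add_neg_cancel]

lemma five_mul_sum_range_choose_two_mul_mul_fib_sq {n : ℕ} (hn : n ≠ 0) :
    5 * ∑ i ∈ range (2 * n + 1), ((2 * n).choose i : ℝ) * (Nat.fib i : ℝ) ^ 2 =
      5 ^ n * lucas (2 * n) := by
  have h5 : √5 ^ 2 = 5 := sq_sqrt (by norm_num)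
  rw [five_mul_sum_range_choose_mul_fib_sq, (even_two_mul n).neg_pow, zero_pow (by omega),
    lucas_eq_goldenRatio_pow_add_goldenConj_pow, mul_pow, mul_pow, pow_mul, h5]
  ring

theorem stmt_3 (n : ℕ) (hn : 1 ≤ n) :
    ∑ i ∈ Finset.range (2 * n + 1), ((2 * n).choose i : ℤ) * (Nat.fib i : ℤ) ^ 2 =
      5 ^ (n - 1) * lucas (2 * n) := by
  obtain ⟨k, rfl⟩ := Nat.exists_eq_add_of_le' hn
  have h := five_mul_sum_range_choose_two_mul_mul_fib_sq k.succ_ne_zero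
  rw [pow_succ', mul_assoc, mul_right_inj' (by norm_num)] at h
  rw [Nat.add_sub_cancel]
  exact_mod_cast h
end

section
/- For all natural numbers n, the sum over i from 0 to 2n+1 of C(2n+1,i)·F_i^2 equals 5^n·F_{2n+1}. -/
/-!
By Binet's formula `5 F_i² = φ^{2i} + ψ^{2i} - 2(-1)^i`, so the binomial theorem gives
`5 ∑ C(m,i) F_i² = (1 + φ²)^m + (1 + ψ²)^m - 2·0^m`. Since `1 + φ² = √5 φ` and `1 + ψ² = -√5 ψ`,
for odd `m = 2n + 1` the right side is `√5^m (φ^m - ψ^m) = √5^{m+1} F_m = 5^{n+1} F_m`.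
-/

open Finset Real goldenRatio

lemma goldenRatio_sq_add_one : φ ^ 2 + 1 = √5 * φ := by
  rw [← goldenRatio_sub_goldenConj]
  linear_combination goldenConj_mul_goldenRatio

lemma goldenConj_sq_add_one : ψ ^ 2 + 1 = -(√5 * ψ) := by
  rw [← goldenRatio_sub_goldenConj]
  linear_combination goldenRatio_mul_goldenConj

theorem five_mul_sum_choose_mul_fib_sq (m : ℕ) :
    5 * ∑ i ∈ range (m + 1), (m.choose i : ℝ) * Nat.fib i ^ 2 =
      (φ ^ 2 + 1) ^ m + (ψ ^ 2 + 1) ^ m - 2 * 0 ^ m := by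
  rw [show (0 : ℝ) = -1 + 1 by norm_num, add_pow, add_pow, add_pow, mul_sum, mul_sum,
    ← sum_add_distrib, ← sum_sub_distrib]
  refine sum_congr rfl fun i _ => ?_
  rw [mul_left_comm, five_mul_fib_sq]
  simp only [one_pow, mul_one]
  ring

lemma sqrt_five_mul_goldenRatio_pow_sub (n : ℕ) :
    (√5 * φ) ^ (2 * n + 1) - (√5 * ψ) ^ (2 * n + 1) = 5 ^ (n + 1) * Nat.fib (2 * n + 1) := by
  have h5 : √5 ^ 2 = 5 := sq_sqrt (by norm_num)
  rw [mul_pow, mul_pow, ← mul_sub, coe_fib_eq, pow_succ, pow_mul, h5]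
  generalize φ ^ (2 * n + 1) - ψ ^ (2 * n + 1) = d
  field_simp
  rw [h5]
  ring

theorem stmt_4 (n : ℕ) :
    ∑ i ∈ Finset.range (2 * n + 2), (2 * n + 1).choose i * Nat.fib i ^ 2 =
      5 ^ n * Nat.fib (2 * n + 1) := by
  have h := five_mul_sum_choose_mul_fib_sq (2 * n + 1)
  rw [goldenRatio_sq_add_one, goldenConj_sq_add_one, (odd_two_mul_add_one n).neg_pow,
    zero_pow (by omega), mul_zero, sub_zero, ← sub_eq_add_neg, sqrt_five_mul_goldenRatio_pow_sub, pow_succ,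
    mul_comm _ (5 : ℝ), mul_assoc] at h
  exact_mod_cast mul_left_cancel₀ (by norm_num) h
end

section
/- For all natural numbers n, 2^n·F_{2n} + 3·F_n ≡ 0 (mod 5). -/
/-! Modulo 5 the characteristic polynomial `x² - x - 1` of the Fibonacci recurrence is `(x - 3)²`,
so `F_n ≡ n·3ⁿ⁻¹`. Then `F_{2n} ≡ 2n·9ⁿ⁻¹`, and as `2·9 ≡ 3` both summands become multiples of
`n·3ⁿ` whose coefficients add up to a multiple of 5. -/

theorem three_mul_fib_eq_of_five_eq_zero {R : Type*} [CommRing R] (h5 : (5 : R) = 0) (n : ℕ) :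
    3 * (Nat.fib n : R) = n * 3 ^ n := by
  induction n using Nat.twoStepInduction with
  | zero => simp
  | one => simp
  | more n ih₀ ih₁ =>
    rw [Nat.fib_add_two]
    push_cast at ih₁ ⊢
    linear_combination ih₀ + ih₁ - (n + 3) * 3 ^ n * h5

theorem stmt_7 (n : ℕ) : 5 ∣ 2 ^ n * Nat.fib (2 * n) + 3 * Nat.fib n := by
  have h5 : (5 : ZMod 5) = 0 := rfl
  have h18 : (2 : ZMod 5) ^ n * 3 ^ (2 * n) = 3 ^ n := by
    rw [pow_mul, ← mul_pow]
    rfl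
  have hFn := three_mul_fib_eq_of_five_eq_zero h5 n
  have hF2n := three_mul_fib_eq_of_five_eq_zero h5 (2 * n)
  rw [← ZMod.natCast_eq_zero_iff]
  push_cast at hF2n ⊢
  -- `X = 6X - 5X`, and `6X = 2·2ⁿ·3F_{2n} + 6·3F_n ≡ 4n·3ⁿ + 6n·3ⁿ ≡ 0`.
  linear_combination 2 * 2 ^ n * hF2n + 6 * hFn + 4 * n * h18 -
    (2 ^ n * Nat.fib (2 * n) + 3 * Nat.fib n - 2 * n * 3 ^ n) * h5
end

section
/- For all natural numbers n, 3^n·L_{2n} - 4·(-1)^n·L_n + 6·2^n ≡ 0 (mod 25), as integers. -/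
/-! Modulo 25 the expression is periodic in `n` with period 20: the units `3`, `2`, `-1` have order
dividing `φ(25) = 20`, and the Lucas sequence modulo 25 returns to its initial pair `(2, 1)` at
`n = 20`. This reduces the claim to the twenty cases `n < 20`, which are checked by computation. -/

open Function

theorem Function.Periodic.of_two_step_rec {α : Type*} (f : α → α → α) {u : ℕ → α}
    (hu : ∀ n, u (n + 2) = f (u (n + 1)) (u n)) {p : ℕ} (h₀ : u p = u 0) (h₁ : u (p + 1) = u 1) :
    Periodic u p := by
  suffices h : ∀ n, u (n + p) = u n ∧ u (n + 1 + p) = u (n + 1) from fun n => (h n).1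
  intro n
  induction n with
  | zero => simpa [add_comm] using ⟨h₀, h₁⟩
  | succ k ih =>
    refine ⟨ih.2, ?_⟩
    rw [show k + 1 + 1 + p = k + p + 2 by omega, hu, show k + p + 1 = k + 1 + p by omega, ih.1,
      ih.2, hu]

theorem lucas_add_two (n : ℕ) : lucas (n + 2) = lucas (n + 1) + lucas n := rfl

theorem periodic_lucas_zmod_25 : Periodic (fun n => (lucas n : ZMod 25)) 20 :=
  .of_two_step_rec (· + ·) (fun n => by push_cast [lucas_add_two]; rfl) (by decide) (by decide)

theorem stmt_8 (n : ℕ) :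
    (25 : ℤ) ∣ 3 ^ n * lucas (2 * n) - 4 * (-1 : ℤ) ^ n * lucas n + 6 * 2 ^ n := by
  let E : ℕ → ZMod 25 := fun n => 3 ^ n * lucas (2 * n) - 4 * (-1) ^ n * lucas n + 6 * 2 ^ n
  have hE : Periodic E 20 := fun n => by
    have hL2 : (lucas (2 * (n + 20)) : ZMod 25) = lucas (2 * n) := by
      simpa [mul_add] using periodic_lucas_zmod_25.nat_mul 2 (2 * n)
    have h3 : (3 : ZMod 25) ^ 20 = 1 := by decide
    have h2 : (2 : ZMod 25) ^ 20 = 1 := by decide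
    have hm : (-1 : ZMod 25) ^ 20 = 1 := by decide
    simp only [E, hL2, periodic_lucas_zmod_25 n, pow_add, h3, h2, hm, mul_one]
  have hsmall : ∀ r < 20, E r = 0 := by decide
  have hEn : E n = 0 := hE.map_mod_nat n ▸ hsmall (n % 20) (Nat.mod_lt _ (by norm_num))
  exact (ZMod.intCast_zmod_eq_zero_iff_dvd _ 25).mp (by push_cast; exact hEn)
end

section
/- For all natural numbers n, the alternating sum over i from 0 to n of (-1)^i·C(n,i)·F_i equals -F_n. -/
/-!
By Binet's formula the sum splits into two binomial expansions,
`∑ (-1)^i C(n,i) φ^i = (1 - φ)^n = ψ^n` and likewise with `φ` and `ψ` exchanged,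
so the roles of the two roots are swapped and `φ^n - ψ^n` changes sign.
-/

open Finset Real

theorem sum_range_neg_one_pow_mul_choose_mul_pow {R : Type*} [CommRing R] (x : R) (n : ℕ) :
    ∑ i ∈ range (n + 1), (-1 : R) ^ i * (n.choose i : R) * x ^ i = (1 - x) ^ n := by
  rw [sub_eq_neg_add, add_pow]
  refine sum_congr rfl fun i _ => ?_
  rw [neg_pow, one_pow, mul_one]
  ring

theorem stmt_9 (n : ℕ) :
    ∑ i ∈ Finset.range (n + 1), (-1 : ℤ) ^ i * (n.choose i : ℤ) * (Nat.fib i : ℤ) =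
      -(Nat.fib n : ℤ) := by
  apply Int.cast_injective (α := ℝ)
  simp only [Int.cast_sum, Int.cast_mul, Int.cast_pow, Int.cast_neg, Int.cast_one,
    Int.cast_natCast, coe_fib_eq]
  simp_rw [mul_div_assoc', mul_sub, ← sum_div, sum_sub_distrib,
    sum_range_neg_one_pow_mul_choose_mul_pow, one_sub_goldenConj, one_sub_goldenRatio]
  ring
end

section
/- For all natural numbers n, 5 times the sum over i from 0 to n of (-1)^i·C(n,i)·F_i^3 equals (-2)^n·F_n - 3·F_{2n}. -/
/-!
By Binet's formula `√5 F_m = φ^m - ψ^m`, cubing gives `5 F_i^3 = F_{3i} - 3 (-1)^i F_i`, and a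
binomial sum `∑ C(n,i) c^i F_{ki}` equals `((1 + c φ^k)^n - (1 + c ψ^k)^n) / √5`. Since
`1 + φ = φ^2` and `1 - φ^3 = -2φ` (likewise for `ψ`), the two sums that arise are `F_{2n}` and
`(-2)^n F_n`.
-/

open Finset Real goldenRatio

lemma sqrt_five_mul_fib (m : ℕ) : √5 * (Nat.fib m : ℝ) = φ ^ m - ψ ^ m := by
  rw [coe_fib_eq]
  field_simp

lemma sqrt_five_mul_sum_choose_mul_fib_mul (n k : ℕ) (c : ℝ) :
    √5 * ∑ i ∈ range (n + 1), (n.choose i : ℝ) * c ^ i * Nat.fib (k * i) =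
      (1 + c * φ ^ k) ^ n - (1 + c * ψ ^ k) ^ n := by
  rw [add_comm 1, add_comm 1, add_pow, add_pow, mul_sum, ← sum_sub_distrib]
  refine sum_congr rfl fun i _ => ?_
  rw [mul_left_comm, sqrt_five_mul_fib]
  ring

lemma sum_choose_mul_fib (n : ℕ) :
    ∑ i ∈ range (n + 1), n.choose i * Nat.fib i = Nat.fib (2 * n) := by
  have h := sqrt_five_mul_sum_choose_mul_fib_mul n 1 1
  simp only [one_pow, mul_one, one_mul, pow_one] at h
  rw [add_comm 1 φ, add_comm 1 ψ, ← goldenRatio_sq, ← goldenConj_sq, ← pow_mul, ← pow_mul,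
    ← sqrt_five_mul_fib] at h
  exact_mod_cast mul_left_cancel₀ (by positivity) h

lemma sum_choose_mul_neg_one_pow_mul_fib_three_mul (n : ℕ) :
    ∑ i ∈ range (n + 1), (n.choose i : ℤ) * (-1) ^ i * Nat.fib (3 * i) = (-2) ^ n * Nat.fib n := by
  have h := sqrt_five_mul_sum_choose_mul_fib_mul n 3 (-1)
  have hφ : 1 + -1 * φ ^ 3 = -2 * φ := by linear_combination (-(φ + 1)) * goldenRatio_sq
  have hψ : 1 + -1 * ψ ^ 3 = -2 * ψ := by linear_combination (-(ψ + 1)) * goldenConj_sq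
  rw [hφ, hψ, mul_pow, mul_pow, ← mul_sub, ← sqrt_five_mul_fib, mul_left_comm] at h
  exact_mod_cast mul_left_cancel₀ (by positivity) h

lemma five_mul_fib_pow_three (i : ℕ) :
    5 * (Nat.fib i : ℤ) ^ 3 = Nat.fib (3 * i) - 3 * (-1) ^ i * Nat.fib i := by
  have h5 : √5 ^ 2 = 5 := sq_sqrt (by norm_num)
  have hφψ : φ ^ i * ψ ^ i = (-1) ^ i := by rw [← mul_pow, goldenRatio_mul_goldenConj]
  have key : √5 * (5 * (Nat.fib i : ℝ) ^ 3) =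
      √5 * (Nat.fib (3 * i) - 3 * (-1) ^ i * Nat.fib i) := by
    rw [mul_sub, mul_left_comm _ _ (Nat.fib i : ℝ), sqrt_five_mul_fib, sqrt_five_mul_fib,
      pow_mul', pow_mul', ← hφψ]
    set x := φ ^ i - ψ ^ i
    linear_combination (x ^ 2 + x * (√5 * Nat.fib i) + (√5 * Nat.fib i) ^ 2) *
      sqrt_five_mul_fib i - √5 * (Nat.fib i : ℝ) ^ 3 * h5
  exact_mod_cast mul_left_cancel₀ (by positivity) key

theorem stmt_11 (n : ℕ) :
    5 * ∑ i ∈ Finset.range (n + 1), (-1 : ℤ) ^ i * (n.choose i : ℤ) * (Nat.fib i : ℤ) ^ 3 =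
      (-2 : ℤ) ^ n * (Nat.fib n : ℤ) - 3 * (Nat.fib (2 * n) : ℤ) := by
  calc 5 * ∑ i ∈ range (n + 1), (-1 : ℤ) ^ i * (n.choose i : ℤ) * (Nat.fib i : ℤ) ^ 3
      = ∑ i ∈ range (n + 1), (n.choose i : ℤ) * (-1) ^ i * Nat.fib (3 * i)
          - 3 * ((∑ i ∈ range (n + 1), n.choose i * Nat.fib i : ℕ) : ℤ) := by
        rw [Nat.cast_sum, mul_sum, mul_sum, ← sum_sub_distrib]
        refine sum_congr rfl fun i _ => ?_
        have hsign : (-1 : ℤ) ^ i * (-1) ^ i = 1 := pow_mul_pow_eq_one i (by norm_num)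
        push_cast
        linear_combination (-1 : ℤ) ^ i * n.choose i * five_mul_fib_pow_three i
          - 3 * n.choose i * Nat.fib i * hsign
    _ = (-2) ^ n * Nat.fib n - 3 * Nat.fib (2 * n) := by
        rw [sum_choose_mul_neg_one_pow_mul_fib_three_mul, sum_choose_mul_fib]
end

section
/- For all natural numbers n, (-2)^n·F_n - 3·F_{2n} ≡ 0 (mod 5), as integers. -/
/-! Modulo 5 the characteristic polynomial `X² - X - 1` of the Fibonacci recurrence is `(X + 2)²`,
so `Fₙ ≡ n (-2)ⁿ⁻¹`. After multiplying by the unit `-2`, both terms of the claim become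
`n (-2)²ⁿ` modulo 5. -/

theorem neg_two_mul_fib_of_five_eq_zero {R : Type*} [CommRing R] (h5 : (5 : R) = 0) (n : ℕ) :
    -2 * (Nat.fib n : R) = n * (-2) ^ n := by
  induction n using Nat.twoStepInduction with
  | zero => simp
  | one => simp
  | more n ih₀ ih₁ =>
    rw [Nat.fib_add_two]
    push_cast at ih₀ ih₁ ⊢
    linear_combination ih₀ + ih₁ - (n + 2) * (-2 : R) ^ n * h5

theorem stmt_15 (n : ℕ) :
    (5 : ℤ) ∣ (-2 : ℤ) ^ n * (Nat.fib n : ℤ) - 3 * (Nat.fib (2 * n) : ℤ) := by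
  apply (ZMod.intCast_zmod_eq_zero_iff_dvd _ 5).mp
  have h5 : (5 : ZMod 5) = 0 := rfl
  have h₁ := neg_two_mul_fib_of_five_eq_zero h5 n
  have h₂ := neg_two_mul_fib_of_five_eq_zero h5 (2 * n)
  push_cast at h₂ ⊢
  linear_combination 2 * (-2 : ZMod 5) ^ n * h₁ - 6 * h₂ +
    ((-2 : ZMod 5) ^ n * Nat.fib n - 3 * Nat.fib (2 * n) - 2 * n * (-2 : ZMod 5) ^ (2 * n)) * h5
end

section
/- The generating function of the cubes of Fibonacci numbers satisfies (1 - 4x - x^2)(1 + x - x^2)·∑_{n≥0} F_n^3 x^n = x·(1 - 2x - x^2) as formal power series over ℚ, where 4 = L_3 and -1 = -L_1 appear as the coefficients. -/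
/-!
Since `φψ = -1`, Binet's formula writes `F_n ^ 3` as a combination of `(φ³)ⁿ, (ψ³)ⁿ, (-φ)ⁿ, (-ψ)ⁿ`.
These are the roots of `(t² - L₃ t - 1)(t² + L₁ t - 1) = t⁴ - 3t³ - 6t² + 3t + 1`, so the cubes
satisfy the corresponding recurrence of order four. Multiplying the generating function by the
reversed polynomial `(1 - 4x - x²)(1 + x - x²)` therefore kills every coefficient of degree at least
four, and the first four are read off from `F_0, …, F_3`.
-/

open PowerSeries Finset

theorem Nat.cast_fib_cube_add_four {R : Type*} [CommRing R] (n : ℕ) :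
    (Nat.fib (n + 4) : R) ^ 3 =
      3 * Nat.fib (n + 3) ^ 3 + 6 * Nat.fib (n + 2) ^ 3 - 3 * Nat.fib (n + 1) ^ 3 - Nat.fib n ^ 3 := by
  simp only [Nat.fib_add_two, Nat.cast_add]
  ring

theorem PowerSeries.mk_eq_sum_add_X_pow_mul_mk {R : Type*} [CommRing R] (g : ℕ → R) (k : ℕ) :
    mk g = ∑ i ∈ range k, C (g i) * X ^ i + X ^ k * mk fun n => g (n + k) := by
  ext n
  rcases lt_or_ge n k with h | h
  · simp [coeff_X_pow_mul', h, not_le.mpr h]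
  · simp [coeff_X_pow_mul', h, not_lt.mpr h]

theorem stmt_17 :
    (1 - 4 * X - X ^ 2) * (1 + X - X ^ 2) *
        PowerSeries.mk (fun n => ((Nat.fib n : ℚ)) ^ 3) =
      X * (1 - 2 * X - X ^ 2) := by
  set F : ℕ → ℚ := fun n => (Nat.fib n : ℚ) ^ 3
  have hF0 : F 0 = 0 := by simp [F]
  have hF1 : F 1 = 1 := by simp [F]
  have hF2 : F 2 = 1 := by simp [F]
  have hF3 : F 3 = 8 := by norm_num [F, Nat.fib_add_two]
  have h1 := mk_eq_sum_add_X_pow_mul_mk F 1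
  have h2 := mk_eq_sum_add_X_pow_mul_mk F 2
  have h3 := mk_eq_sum_add_X_pow_mul_mk F 3
  have h4 := mk_eq_sum_add_X_pow_mul_mk F 4
  simp only [sum_range_succ, sum_range_zero, hF0, hF1, hF2, hF3, map_zero, map_one, map_ofNat]
    at h1 h2 h3 h4
  have hrec : (mk fun n => F (n + 4)) = C 3 * (mk fun n => F (n + 3))
      + C 6 * (mk fun n => F (n + 2)) - C 3 * (mk fun n => F (n + 1)) - mk F := by
    ext n
    simp only [map_add, map_sub, coeff_C_mul, coeff_mk, F, Nat.cast_fib_cube_add_four]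
  simp only [map_ofNat] at hrec
  linear_combination h4 - 3 * X * h3 - 6 * X ^ 2 * h2 + 3 * X ^ 3 * h1 + X ^ 4 * hrec
end
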